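/- Let H be a Hopf algebra over k whose antipode S is bijective, and let C be a counital left H-module coalgebra. Then for every δ ∈ C* and h ∈ H one has Ψ(δ·h) = S⁻¹(h)•Ψ(δ), where (δ·h)(c) := δ(h•c), Ψ(δ)(c) = Σ δ(c₍₁₎)c₍₂₎, and (g•u)(c) = Σ g₍₁₎•u(S(g₍₂₎)•c) is the conjugation action of H on End_k(C). -/

import Mathlib

/-!
STATEMENT 5: Let `H` be a Hopf algebra over `k` with bijective antipode `S`, and `C` a
counital left `H`-module coalgebra.  Then for every `δ ∈ C*` and `h ∈ H` one has
`Ψ(δ·h) = S⁻¹(h)•Ψ(δ)`, where `(δ·h)(c) := δ(h•c)`, `Ψ(δ)(c) = Σ δ(c₍₁₎)c₍₂₎`, and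
`(g•u)(c) = Σ g₍₁₎•u(S(g₍₂₎)•c)` is the conjugation action of `H` on `End_k(C)`.
-/

open TensorProduct

noncomputable section

variable (k H C : Type*) [Field k] [Semiring H] [HopfAlgebra k H]
  [AddCommGroup C] [Module k C] [Coalgebra k C]
  [Module H C] [IsScalarTower k H C] [SMulCommClass k H C]

/-- The action of `H` on `C` as a `k`-bilinear map. -/
def actBil : H →ₗ[k] C →ₗ[k] C :=
  LinearMap.mk₂ k (fun h c => h • c)
    (fun h h' c => add_smul h h' c)
    (fun a h c => smul_assoc a h c)
    (fun h c c' => smul_add h c c')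
    (fun a h c => (smul_comm a h c).symm)

/-- The action of `H` on `C` as a linear map `H ⊗ C → C`. -/
def act : H ⊗[k] C →ₗ[k] C := TensorProduct.lift (actBil k H C)

/-- The conjugation action of `H` on `End_k(C)`:  `(g•u)(c) = Σ g₍₁₎ • u (S(g₍₂₎) • c)`. -/
def conj (g : H) (u : C →ₗ[k] C) : C →ₗ[k] C :=
  act k H C ∘ₗ
    TensorProduct.map LinearMap.id
      (u ∘ₗ act k H C ∘ₗ TensorProduct.map (HopfAlgebra.antipode (R := k)) LinearMap.id) ∘ₗ
    (TensorProduct.assoc k H H C).toLinearMap ∘ₗ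
    TensorProduct.mk k (H ⊗[k] H) C (Coalgebra.comul g)

/-- The right `H`-action on `C*`:  `(δ·h)(c) = δ(h•c)`. -/
def rAct (δ : C →ₗ[k] k) (h : H) : C →ₗ[k] k := δ ∘ₗ actBil k H C h

/-- The map `Ψ : C* → End_k(C)`, `Ψ(δ)(c) = Σ δ(c₍₁₎) c₍₂₎`. -/
def psi (δ : C →ₗ[k] k) : C →ₗ[k] C :=
  (TensorProduct.lid k C).toLinearMap ∘ₗ TensorProduct.map δ LinearMap.id ∘ₗ Coalgebra.comul

/-! Write `Θ(x ⊗ y) = x • Ψ(δ·y)(c)`. Compatibility of `Δ_C` with the action gives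
`Ψ(δ)(y•c) = Σ Θ(y₂ ⊗ y₁)`, so that `(g•Ψ(δ))(c) = Σ Θ(g₁ S(g₂)₂ ⊗ S(g₂)₁)`. Since the antipode
is an anti-coalgebra map, `Δ(S a) = Σ S(a₂) ⊗ S(a₁)`, the argument of `Θ` collapses to
`Σ g₁ S(g₂) ⊗ S(g₃) = 1 ⊗ S(g)`. Hence `g•Ψ(δ) = Ψ(δ·S(g))`, and `g = S⁻¹(h)` gives the claim. -/

open Coalgebra WithConv

namespace HopfAlgebra

variable {R A : Type*} [CommSemiring R] [Semiring A] [HopfAlgebra R A]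

lemma sum_antipode_tmul_one_mul_comul {ι : Type*} {a : A} (𝓡 : Coalgebra.Repr R a ι) :
    ∑ i ∈ 𝓡.index, (antipode R (𝓡.left i) ⊗ₜ[R] (1 : A)) * comul (R := R) (𝓡.right i) =
      1 ⊗ₜ a := by
  let M : A ⊗[R] (A ⊗[R] A) →ₗ[R] A ⊗[R] A :=
    TensorProduct.lift (LinearMap.mul R (A ⊗[R] A) ∘ₗ
      (TensorProduct.mk R A A).flip 1 ∘ₗ antipode R)
  have h := congr(M $(sum_tmul_tmul_eq 𝓡 (fun i ↦ ℛ R (𝓡.left i)) (fun i ↦ ℛ R (𝓡.right i))))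
  simp only [map_sum, M, lift.tmul, LinearMap.comp_apply, LinearMap.flip_apply, mk_apply,
    LinearMap.mul_apply', Algebra.TensorProduct.tmul_mul_tmul, one_mul, ← sum_tmul, (ℛ R _).eq,
    sum_antipode_mul_eq_smul, smul_tmul, ← tmul_sum, sum_counit_smul] at h
  exact h.symm

lemma comul_antipode_convMul_comul_eq_one :
    toConv (map (antipode R) (antipode R) ∘ₗ (TensorProduct.comm R A A).toLinearMap ∘ₗ comul) *
      toConv (comul (R := R) (A := A)) = 1 := by
  ext a
  let L : A ⊗[R] (A ⊗[R] A) →ₗ[R] A ⊗[R] A :=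
    LinearMap.mul' R (A ⊗[R] A) ∘ₗ
      map (map (antipode R) (antipode R) ∘ₗ (TensorProduct.comm R A A).toLinearMap) comul ∘ₗ
      (TensorProduct.assoc R A A A).symm.toLinearMap
  have hL (x y z : A) : L (x ⊗ₜ (y ⊗ₜ z)) =
      (1 ⊗ₜ antipode R x) * ((antipode R y ⊗ₜ[R] (1 : A)) * comul (R := R) z) := by
    rw [← mul_assoc, Algebra.TensorProduct.tmul_mul_tmul, one_mul, mul_one]
    rfl
  set 𝓡 := ℛ R a
  have coassoc := congr(L $(sum_tmul_tmul_eq 𝓡 (fun i ↦ ℛ R (𝓡.left i))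
    (fun i ↦ ℛ R (𝓡.right i))))
  simp only [map_sum, hL, ← Finset.mul_sum, sum_antipode_tmul_one_mul_comul,
    Algebra.TensorProduct.tmul_mul_tmul, one_mul] at coassoc
  have hG (x : A) : (map (antipode R) (antipode R) ∘ₗ (TensorProduct.comm R A A).toLinearMap ∘ₗ
      comul) x =
        ∑ j ∈ (ℛ R x).index, antipode R ((ℛ R x).right j) ⊗ₜ antipode R ((ℛ R x).left j) := by
    simp [← (ℛ R x).eq]
  simp only [← mul_assoc, Algebra.TensorProduct.tmul_mul_tmul, one_mul, mul_one, ← Finset.sum_mul,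
    ← hG, ← tmul_sum, sum_antipode_mul_eq_algebraMap_counit] at coassoc
  rw [𝓡.convMul_apply]
  refine coassoc.trans ?_
  simp [Algebra.algebraMap_eq_smul_one, Algebra.TensorProduct.one_def]

theorem comul_antipode (a : A) :
    comul (R := R) (antipode R a) =
      map (antipode R) (antipode R) (TensorProduct.comm R A A (comul a)) := by
  -- `(S ⊗ S) ∘ τ ∘ Δ` is a left and `Δ ∘ S` a right convolution inverse of `Δ`
  have h := left_inv_eq_right_inv (M := WithConv (A →ₗ[R] A ⊗[R] A))
    comul_antipode_convMul_comul_eq_one LinearMap.comul_right_inv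
  exact congr(ofConv $h a).symm

lemma sum_tmul_one_mul_comm_comul_antipode {ι : Type*} {a : A} (𝓡 : Coalgebra.Repr R a ι) :
    ∑ i ∈ 𝓡.index, (𝓡.left i ⊗ₜ[R] (1 : A)) *
      TensorProduct.comm R A A (comul (antipode R (𝓡.right i))) = 1 ⊗ₜ antipode R a := by
  let N : A ⊗[R] (A ⊗[R] A) →ₗ[R] A ⊗[R] A :=
    map (LinearMap.mul' R A ∘ₗ (antipode R).lTensor A) (antipode R) ∘ₗ
      (TensorProduct.assoc R A A A).symm.toLinearMap
  have hN (x y z : A) : N (x ⊗ₜ (y ⊗ₜ z)) = (x ⊗ₜ[R] (1 : A)) * (antipode R y ⊗ₜ antipode R z) := by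
    simp [N]
  have coassoc := congr(N $(sum_tmul_tmul_eq 𝓡 (fun i ↦ ℛ R (𝓡.left i))
    (fun i ↦ ℛ R (𝓡.right i))))
  simp only [map_sum, hN, Algebra.TensorProduct.tmul_mul_tmul, one_mul, ← sum_tmul,
    sum_mul_antipode_eq_smul, smul_tmul] at coassoc
  conv_rhs => rw [← sum_counit_smul 𝓡, map_sum, tmul_sum]
  simp only [map_smul, coassoc, comul_antipode, map_comm, comm_comm, ← (ℛ R (𝓡.right _)).eq,
    map_sum, map_tmul, Finset.mul_sum, Algebra.TensorProduct.tmul_mul_tmul, one_mul]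

end HopfAlgebra

section ModuleCoalgebra

variable {k H C}

omit [Coalgebra k C] in
@[simp]
lemma act_tmul (x : H) (c : C) : act k H C (x ⊗ₜ c) = x • c :=
  rfl

lemma psi_apply (δ : C →ₗ[k] k) {ι : Type*} {c : C} (𝓡 : Coalgebra.Repr k c ι) :
    psi k C δ c = ∑ q ∈ 𝓡.index, δ (𝓡.left q) • 𝓡.right q := by
  simp [psi, ← 𝓡.eq]

omit [Coalgebra k C] in
lemma conj_apply (u : C →ₗ[k] C) (c : C) {ι : Type*} {g : H} (𝓡 : Coalgebra.Repr k g ι) :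
    conj k H C g u c = ∑ i ∈ 𝓡.index, 𝓡.left i • u (HopfAlgebra.antipode k (𝓡.right i) • c) := by
  simp [conj, ← 𝓡.eq, act, actBil]

variable (δ : C →ₗ[k] k) (c : C)

lemma psi_rAct_apply (y : H) {ι : Type*} (𝓡 : Coalgebra.Repr k c ι) :
    psi k C (rAct k H C δ y) c = ∑ q ∈ 𝓡.index, δ (y • 𝓡.left q) • 𝓡.right q := by
  simp [psi_apply _ 𝓡, rAct, actBil]

def psiRAct : H →ₗ[k] C where
  toFun y := psi k C (rAct k H C δ y) c
  map_add' y y' := by simp [psi_rAct_apply _ _ _ (ℛ k c), add_smul, Finset.sum_add_distrib]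
  map_smul' a y := by simp [psi_rAct_apply _ _ _ (ℛ k c), Finset.smul_sum, smul_smul]

def smulPsiRAct : H ⊗[k] H →ₗ[k] C :=
  TensorProduct.lift ((actBil k H C).compl₂ (psiRAct δ c))

@[simp]
lemma smulPsiRAct_tmul (x y : H) :
    smulPsiRAct δ c (x ⊗ₜ y) = x • psi k C (rAct k H C δ y) c :=
  rfl

lemma smulPsiRAct_tmul_one_mul (x : H) (t : H ⊗[k] H) :
    smulPsiRAct δ c ((x ⊗ₜ 1) * t) = x • smulPsiRAct δ c t := by
  induction t using TensorProduct.induction_on with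
  | zero => simp
  | tmul y z => simp [mul_smul]
  | add t t' ht ht' => simp [mul_add, ht, ht']

lemma psi_smul
    (hΔ : ∀ (h : H) (c : C), Coalgebra.comul (h • c) =
      TensorProduct.map (act k H C) (act k H C)
        (TensorProduct.tensorTensorTensorComm k H H C C
          (Coalgebra.comul h ⊗ₜ[k] Coalgebra.comul c))) (y : H) :
    psi k C δ (y • c) = smulPsiRAct δ c (TensorProduct.comm k H H (comul y)) := by
  rw [psi, LinearMap.comp_apply, LinearMap.comp_apply, hΔ, ← (ℛ k y).eq, ← (ℛ k c).eq]
  simp only [sum_tmul, tmul_sum, map_sum, tensorTensorTensorComm_tmul, map_tmul, comm_tmul,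
    smulPsiRAct_tmul, psi_rAct_apply _ _ _ (ℛ k c), Finset.smul_sum, act_tmul,
    LinearEquiv.coe_coe, lid_tmul, LinearMap.id_apply]
  rw [Finset.sum_comm]
  exact Finset.sum_congr rfl fun _ _ ↦ Finset.sum_congr rfl fun _ _ ↦ smul_comm _ _ _

theorem conj_psi
    (hΔ : ∀ (h : H) (c : C), Coalgebra.comul (h • c) =
      TensorProduct.map (act k H C) (act k H C)
        (TensorProduct.tensorTensorTensorComm k H H C C
          (Coalgebra.comul h ⊗ₜ[k] Coalgebra.comul c))) (g : H) :
    conj k H C g (psi k C δ) = psi k C (rAct k H C δ (HopfAlgebra.antipode k g)) := by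
  ext c
  rw [conj_apply _ _ (ℛ k g)]
  simp_rw [psi_smul δ c hΔ, ← smulPsiRAct_tmul_one_mul, ← map_sum,
    HopfAlgebra.sum_tmul_one_mul_comm_comul_antipode, smulPsiRAct_tmul, one_smul]

end ModuleCoalgebra

theorem psi_compatible_with_H_actions
    (Sinv : H → H)
    (hSr : Function.RightInverse Sinv (HopfAlgebra.antipode (R := k) (A := H)))
    (hΔ : ∀ (h : H) (c : C), Coalgebra.comul (h • c) =
      TensorProduct.map (act k H C) (act k H C)
        (TensorProduct.tensorTensorTensorComm k H H C C
          (Coalgebra.comul h ⊗ₜ[k] Coalgebra.comul c))) :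
    ∀ (δ : C →ₗ[k] k) (h : H),
      psi k C (rAct k H C δ h) = conj k H C (Sinv h) (psi k C δ) := by
  intro δ h
  rw [conj_psi δ hΔ, hSr h]

end
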